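/- arXiv:1907.10349 — 2 statements merged into one kernel-verified Lean document; each statement's English description precedes it below -/
import Mathlib

section
/- Define f̃_λ(u,v) = 8u³v⁴ − 6uλ²(v⁶ − v²) − 4λ³(v⁶ + v²) − λ³(v⁸ − 1). Then for all u ∈ ℂ, t ∈ ℝ, and λ ∈ ℝ, f̃_λ(u, e^{it}) = 8e^{4it} · g_λ(u,t), where g_λ(u,t) = ∏_{j=1}^{3} (u − λ(cos((2t+2πj)/3) + i·sin(2(2t+2πj)/3))). In particular, for v on the unit circle, f̃_λ(u,v) = 0 if and only if g_λ(u,t) = 0 where v = e^{it}. -/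
open Complex Real

private lemma circ (x : ℝ) :
    ((Real.cos x : ℝ) : ℂ) + Complex.I * ((Real.sin (2*x) : ℝ) : ℂ) =
      (Complex.exp ((x:ℂ) * Complex.I) + (Complex.exp ((x:ℂ) * Complex.I))⁻¹)/2 +
      ((Complex.exp ((x:ℂ) * Complex.I))^2 - ((Complex.exp ((x:ℂ) * Complex.I))^2)⁻¹)/2 := by
  have hinv : ∀ y:ℝ, (Complex.exp ((y:ℂ) * Complex.I))⁻¹
      = Complex.cos y - Complex.sin y * Complex.I := by
    intro y
    rw [← Complex.exp_neg, ← neg_mul, Complex.exp_mul_I]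
    rw [show (-(y:ℂ)) = ((-y : ℝ) : ℂ) by push_cast; ring, ← Complex.ofReal_cos,
      ← Complex.ofReal_sin, Real.cos_neg, Real.sin_neg, ← Complex.ofReal_cos,
      ← Complex.ofReal_sin]
    push_cast
    ring
  have hsq : (Complex.exp ((x:ℂ) * Complex.I))^2
      = Complex.exp (((2*x : ℝ):ℂ) * Complex.I) := by
    rw [sq, ← Complex.exp_add]
    congr 1
    push_cast
    ring
  rw [Complex.ofReal_cos, Complex.ofReal_sin, hsq, hinv, hinv,
    Complex.exp_mul_I, Complex.exp_mul_I]
  ring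

private lemma alg_identity (u l a b z : ℂ) (hab : a * b = 1) (hz : z^2 + z + 1 = 0) :
    8*u^3*a^6 - 6*u*l^2*(a^9 - a^3) - 4*l^3*(a^9 + a^3) - l^3*(a^12 - 1) =
      8*a^6 * ((u - l*((a + b)/2 + (a^2 - b^2)/2)) *
        ((u - l*((a*z + b*z^2)/2 + ((a*z)^2 - b^2*z)/2)) *
         (u - l*((a*z^2 + b*z)/2 + ((a*z^2)^2 - b^2*z^2)/2)))) := by
  linear_combination ((-1 : ℂ)*l^3 + (-1 : ℂ)*l^3*a*b + (-1 : ℂ)*l^3*a^2*b^2 + (4 : ℂ)*l^3*a^3 + (-1 : ℂ)*l^3*a^3*b^3 + (4 : ℂ)*l^3*a^4*b + l^3*a^4*b^3 + l^3*a^4*b^3*z + l^3*a^4*b^3*z^2 + (-1 : ℂ)*l^3*a^4*b^4 + (3 : ℂ)*l^3*a^5 + (4 : ℂ)*l^3*a^5*z + (4 : ℂ)*l^3*a^5*z^2 + l^3*a^5*z^3 + (-1 : ℂ)*l^3*a^5*b + (-1 : ℂ)*l^3*a^5*b*z + (-1 : ℂ)*l^3*a^5*b*z^2 + (-4 : ℂ)*l^3*a^5*b^2*z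 + (-4 : ℂ)*l^3*a^5*b^2*z^2 + l^3*a^5*b^4 + (-1 : ℂ)*l^3*a^5*b^4*z^3 + l^3*a^5*b^5*z + l^3*a^5*b^5*z^2 + (-1 : ℂ)*l^3*a^6 + l^3*a^6*z^3 + (3 : ℂ)*l^3*a^6*b + (-1 : ℂ)*l^3*a^6*b*z^2 + (-4 : ℂ)*l^3*a^6*b*z^3 + (-1 : ℂ)*l^3*a^6*b*z^4 + (2 : ℂ)*l^3*a^6*b^2 + (3 : ℂ)*l^3*a^6*b^2*z + (3 : ℂ)*l^3*a^6*b^2*z^2 + l^3*a^6*b^2*z^3 + (-3 : ℂ)*l^3*a^6*b^3*z + (-3 : ℂ)*l^3*a^6*b^3*z^2 + (-1 : ℂ)*l^3*a^7 + (-3 : ℂ)*l^3*a^7*z + (-3 : ℂ)*l^3*a^7*z^2 + (-2 : ℂ)*l^3*a^7*z^3 + l^3*a^7*b*z + l^3*a^7*b*z^2 + (-1 : ℂ)*l^3*a^7*b*z^4 + (-1 : ℂ)*l^3*a^7*b*z^5 + (-1 : ℂ)*l^3*a^7*b^2 + (-3 : ℂ)*l^3*a^7*b^2*z + (-2 : ℂ)*l^3*a^7*b^2*z^2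 + (2 : ℂ)*l^3*a^7*b^2*z^4 + l^3*a^7*b^2*z^5 + (-1 : ℂ)*l^3*a^7*b^3*z + (-2 : ℂ)*l^3*a^7*b^3*z^2 + (-2 : ℂ)*l^3*a^7*b^3*z^3 + (-1 : ℂ)*l^3*a^7*b^3*z^4 + (2 : ℂ)*l^3*a^8 + (-1 : ℂ)*l^3*a^8*z + (-2 : ℂ)*l^3*a^8*z^2 + (-4 : ℂ)*l^3*a^8*z^3 + (-1 : ℂ)*l^3*a^8*z^4 + (-2 : ℂ)*l^3*a^8*b*z + (2 : ℂ)*l^3*a^8*b*z^4 + (-1 : ℂ)*l^3*a^9*z + (-1 : ℂ)*l^3*a^9*z^2 + (-2 : ℂ)*l^3*a^9*z^4 + (-2 : ℂ)*l^3*a^9*z^5 + l^3*a^9*b*z^2 + (2 : ℂ)*l^3*a^9*b*z^3 + (2 : ℂ)*l^3*a^9*b*z^4 + l^3*a^9*b*z^5 + (-6 : ℂ)*u*l^2*a^3 + (-4 : ℂ)*u*l^2*a^4*b + (2 : ℂ)*u*l^2*a^4*b*z + (2 : ℂ)*u*l^2*a^4*b*z^2 + (-4 : ℂ)*u*l^2*a^5*b^2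 + (-2 : ℂ)*u*l^2*a^5*b^2*z^3 + (6 : ℂ)*u*l^2*a^6 + (10 : ℂ)*u*l^2*a^6*z + (10 : ℂ)*u*l^2*a^6*z^2 + (4 : ℂ)*u*l^2*a^6*z^3 + (2 : ℂ)*u*l^2*a^7 + (2 : ℂ)*u*l^2*a^7*z + (2 : ℂ)*u*l^2*a^7*z^5 + (2 : ℂ)*u*l^2*a^7*b*z + (-6 : ℂ)*u*l^2*a^7*b*z^3 + (-2 : ℂ)*u*l^2*a^7*b*z^4) * hab + (l^3*a^4*b^3 + (3 : ℂ)*l^3*a^5 + l^3*a^5*z + (-1 : ℂ)*l^3*a^5*b + (-4 : ℂ)*l^3*a^5*b^2 + (-1 : ℂ)*l^3*a^5*b^4*z + l^3*a^5*b^5 + (-1 : ℂ)*l^3*a^6 + l^3*a^6*z + (-4 : ℂ)*l^3*a^6*b*z + (-1 : ℂ)*l^3*a^6*b*z^2 + (3 : ℂ)*l^3*a^6*b^2 + l^3*a^6*b^2*z + l^3*a^6*b^3*z + (-1 : ℂ)*l^3*a^6*b^4*z^2 + (-1 : ℂ)*l^3*a^6*b^5 + l^3*a^6*b^5*z + l^3*a^6*b^5*z^2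 + (-1 : ℂ)*l^3*a^6*b^6*z + (-1 : ℂ)*l^3*a^7 + (-2 : ℂ)*l^3*a^7*z + l^3*a^7*b + (-1 : ℂ)*l^3*a^7*b*z^3 + (-4 : ℂ)*l^3*a^7*b^2 + l^3*a^7*b^2*z + (3 : ℂ)*l^3*a^7*b^2*z^2 + l^3*a^7*b^2*z^3 + (-2 : ℂ)*l^3*a^7*b^3 + (-2 : ℂ)*l^3*a^7*b^3*z + (-3 : ℂ)*l^3*a^7*b^3*z^2 + (3 : ℂ)*l^3*a^7*b^4*z + (2 : ℂ)*l^3*a^8 + (-3 : ℂ)*l^3*a^8*z + (-1 : ℂ)*l^3*a^8*z^2 + l^3*a^8*b + (3 : ℂ)*l^3*a^8*b*z^2 + (-1 : ℂ)*l^3*a^8*b^2*z + l^3*a^8*b^2*z^4 + l^3*a^8*b^3 + (2 : ℂ)*l^3*a^8*b^3*z + (-2 : ℂ)*l^3*a^8*b^3*z^2 + (-1 : ℂ)*l^3*a^8*b^3*z^3 + (-1 : ℂ)*l^3*a^8*b^3*z^4 + l^3*a^8*b^4*z + l^3*a^8*b^4*z^2 + l^3*a^8*b^4*z^3 + (-4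 : ℂ)*l^3*a^9 + (3 : ℂ)*l^3*a^9*z + (-2 : ℂ)*l^3*a^9*z^3 + (-2 : ℂ)*l^3*a^9*b + (3 : ℂ)*l^3*a^9*b*z + (3 : ℂ)*l^3*a^9*b*z^2 + l^3*a^9*b*z^3 + l^3*a^9*b*z^4 + (2 : ℂ)*l^3*a^9*b^2*z + (-2 : ℂ)*l^3*a^9*b^2*z^2 + (-2 : ℂ)*l^3*a^9*b^2*z^3 + l^3*a^10*z^3 + l^3*a^10*b*z + (2 : ℂ)*l^3*a^10*b*z^4 + (-1 : ℂ)*l^3*a^10*b^2*z^2 + (-1 : ℂ)*l^3*a^10*b^2*z^3 + (-1 : ℂ)*l^3*a^10*b^2*z^4 + l^3*a^11*z^4 + (-1 : ℂ)*l^3*a^12 + l^3*a^12*z + (-1 : ℂ)*l^3*a^12*z^3 + l^3*a^12*z^4 + (2 : ℂ)*u*l^2*a^4*b + (-2 : ℂ)*u*l^2*a^5*b^2*z + (6 : ℂ)*u*l^2*a^6 + (4 : ℂ)*u*l^2*a^6*z + (-2 : ℂ)*u*l^2*a^6*b^2*z + (4 : ℂ)*u*l^2*a^6*b^3 + (2 :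 ℂ)*u*l^2*a^6*b^3*z^2 + (-2 : ℂ)*u*l^2*a^6*b^4*z + (2 : ℂ)*u*l^2*a^7 + (-2 : ℂ)*u*l^2*a^7*z^2 + (2 : ℂ)*u*l^2*a^7*z^3 + (-6 : ℂ)*u*l^2*a^7*b + (-6 : ℂ)*u*l^2*a^7*b*z + (-4 : ℂ)*u*l^2*a^7*b*z^2 + (4 : ℂ)*u*l^2*a^7*b^2*z + (-2 : ℂ)*u*l^2*a^8*z + (-2 : ℂ)*u*l^2*a^8*b + (-2 : ℂ)*u*l^2*a^8*b*z + (-2 : ℂ)*u*l^2*a^8*b*z^4 + (4 : ℂ)*u*l^2*a^8*b^2*z^2 + (2 : ℂ)*u*l^2*a^8*b^2*z^3 + (-6 : ℂ)*u*l^2*a^9 + (4 : ℂ)*u*l^2*a^9*z + (-2 : ℂ)*u*l^2*a^9*z^2 + (-2 : ℂ)*u*l^2*a^9*z^3 + (-2 : ℂ)*u*l^2*a^10*z^2 + (2 : ℂ)*u*l^2*a^10*z^3 + (-2 : ℂ)*u*l^2*a^10*z^4 + (4 : ℂ)*u^2*l*a^6*b + (-4 : ℂ)*u^2*l*a^6*b^2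 + (4 : ℂ)*u^2*l*a^7 + (4 : ℂ)*u^2*l*a^8 + (-4 : ℂ)*u^2*l*a^8*z + (4 : ℂ)*u^2*l*a^8*z^2) * hz

/-- On the unit circle `v = e^{it}` the holomorphic polynomial `f̃_λ` agrees with
`8 e^{4it} g_λ(u,t)`; in particular their zeros coincide there. -/
theorem figure_eight_polynomial_on_unit_circle
    (lam : ℝ)
    (ftilde : ℝ → ℂ → ℂ → ℂ)
    (hf : ∀ (μ : ℝ) (u v : ℂ), ftilde μ u v =
      8 * u ^ 3 * v ^ 4 - 6 * u * (μ : ℂ) ^ 2 * (v ^ 6 - v ^ 2)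
        - 4 * (μ : ℂ) ^ 3 * (v ^ 6 + v ^ 2) - (μ : ℂ) ^ 3 * (v ^ 8 - 1))
    (g : ℝ → ℂ → ℝ → ℂ)
    (hg : ∀ (μ : ℝ) (u : ℂ) (t : ℝ), g μ u t =
      ∏ j ∈ Finset.range 3,
        (u - (μ : ℂ) * ((Real.cos ((2 * t + 2 * π * (j + 1)) / 3) : ℝ) +
          Complex.I * (Real.sin (2 * (2 * t + 2 * π * (j + 1)) / 3) : ℝ)))) :
    ∀ (u : ℂ) (t : ℝ),
      ftilde lam u (Complex.exp (Complex.I * (t : ℂ))) =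
        8 * Complex.exp (4 * Complex.I * (t : ℂ)) * g lam u t ∧
      (ftilde lam u (Complex.exp (Complex.I * (t : ℂ))) = 0 ↔ g lam u t = 0) := by
  intro u t
  set A : ℂ := Complex.exp ((((2*t + 2*π)/3 : ℝ) : ℂ) * Complex.I) with hA
  set Z : ℂ := Complex.exp (((2*π/3 : ℝ) : ℂ) * Complex.I) with hZdef
  set B : ℂ := A⁻¹ with hBdef
  have hA0 : A ≠ 0 := Complex.exp_ne_zero _
  have hAB : A * B = 1 := mul_inv_cancel₀ hA0
  have hZ3 : Z ^ 3 = 1 := by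
    rw [hZdef, ← Complex.exp_nat_mul]
    rw [show ((3:ℕ):ℂ) * (((2*π/3 : ℝ):ℂ) * Complex.I) = 2*(π:ℂ)*Complex.I by
      push_cast; ring]
    exact Complex.exp_two_pi_mul_I
  have hZ1 : Z ≠ 1 := by
    intro h
    have him : Z.im = Real.sin (2*π/3) := by
      rw [hZdef, Complex.exp_mul_I, ← Complex.ofReal_cos, ← Complex.ofReal_sin]
      simp only [Complex.add_im, Complex.mul_im, Complex.ofReal_im, Complex.ofReal_re,
        Complex.I_re, Complex.I_im, mul_zero, mul_one, zero_add, zero_mul, add_zero]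
    rw [h] at him
    simp only [Complex.one_im] at him
    have hpos : 0 < Real.sin (2*π/3) :=
      Real.sin_pos_of_pos_of_lt_pi (by positivity) (by nlinarith [Real.pi_pos])
    rw [← him] at hpos
    exact lt_irrefl _ hpos
  have hZ2 : Z ^ 2 + Z + 1 = 0 := by
    have h : (Z - 1) * (Z ^ 2 + Z + 1) = 0 := by linear_combination hZ3
    rcases mul_eq_zero.mp h with h' | h'
    · exact absurd (sub_eq_zero.mp h') hZ1
    · exact h'
  have hxj : ∀ j : ℕ, Complex.exp ((((2 * t + 2 * π * (j + 1)) / 3 : ℝ) : ℂ) * Complex.I)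
      = A * Z ^ j := by
    intro j
    rw [hA, hZdef, ← Complex.exp_nat_mul, ← Complex.exp_add]
    congr 1
    push_cast
    ring
  have key : ∀ j : ℕ,
      ((Real.cos ((2 * t + 2 * π * (j + 1)) / 3) : ℝ) : ℂ) +
        Complex.I * ((Real.sin (2 * (2 * t + 2 * π * (j + 1)) / 3) : ℝ) : ℂ)
      = (A * Z ^ j + (A * Z ^ j)⁻¹)/2 + ((A * Z ^ j)^2 - ((A * Z ^ j)^2)⁻¹)/2 := by
    intro j
    rw [show 2 * (2 * t + 2 * π * (j + 1)) / 3 = 2 * ((2 * t + 2 * π * (j + 1)) / 3) by ring]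
    rw [circ ((2 * t + 2 * π * (j + 1)) / 3), hxj j]
  have hgval : g lam u t = ∏ j ∈ Finset.range 3,
      (u - (lam : ℂ) * ((A * Z ^ j + (A * Z ^ j)⁻¹)/2
        + ((A * Z ^ j)^2 - ((A * Z ^ j)^2)⁻¹)/2)) := by
    rw [hg]
    exact Finset.prod_congr rfl fun j _ => by rw [key j]
  have i10 : (A * Z ^ 0)⁻¹ = B := by rw [pow_zero, mul_one]
  have i20 : ((A * Z ^ 0) ^ 2)⁻¹ = B ^ 2 := by
    rw [pow_zero, mul_one, hBdef]
    exact (inv_pow A 2).symm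
  have i11 : (A * Z ^ 1)⁻¹ = B * Z ^ 2 :=
    inv_eq_of_mul_eq_one_right (by linear_combination Z^3 * hAB + hZ3)
  have i21 : ((A * Z ^ 1) ^ 2)⁻¹ = B ^ 2 * Z :=
    inv_eq_of_mul_eq_one_right (by linear_combination (A*B*Z^3 + Z^3) * hAB + hZ3)
  have i12 : (A * Z ^ 2)⁻¹ = B * Z :=
    inv_eq_of_mul_eq_one_right (by linear_combination Z^3 * hAB + hZ3)
  have i22 : ((A * Z ^ 2) ^ 2)⁻¹ = B ^ 2 * Z ^ 2 :=
    inv_eq_of_mul_eq_one_right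
      (by linear_combination (A*B*Z^6 + Z^6) * hAB + (Z^3 + 1) * hZ3)
  have hv2 : Complex.exp (Complex.I * (t:ℂ)) ^ 2 = A ^ 3 := by
    rw [hA, ← Complex.exp_nat_mul, ← Complex.exp_nat_mul]
    rw [show ((3:ℕ):ℂ) * ((((2*t + 2*π)/3 : ℝ):ℂ) * Complex.I)
        = ((2:ℕ):ℂ) * (Complex.I * (t:ℂ)) + 2*(π:ℂ)*Complex.I by push_cast; ring]
    rw [Complex.exp_add, Complex.exp_two_pi_mul_I, mul_one]
  have hv4 : Complex.exp (Complex.I * (t:ℂ)) ^ 4 = A ^ 6 := by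
    rw [show Complex.exp (Complex.I * (t:ℂ)) ^ 4
      = (Complex.exp (Complex.I * (t:ℂ)) ^ 2) ^ 2 by ring, hv2]; ring
  have hv6 : Complex.exp (Complex.I * (t:ℂ)) ^ 6 = A ^ 9 := by
    rw [show Complex.exp (Complex.I * (t:ℂ)) ^ 6
      = (Complex.exp (Complex.I * (t:ℂ)) ^ 2) ^ 3 by ring, hv2]; ring
  have hv8 : Complex.exp (Complex.I * (t:ℂ)) ^ 8 = A ^ 12 := by
    rw [show Complex.exp (Complex.I * (t:ℂ)) ^ 8
      = (Complex.exp (Complex.I * (t:ℂ)) ^ 2) ^ 4 by ring, hv2]; ring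
  have hE4 : Complex.exp (4 * Complex.I * (t:ℂ)) = A ^ 6 := by
    rw [show (4:ℂ) * Complex.I * (t:ℂ) = ((4:ℕ):ℂ) * (Complex.I * (t:ℂ)) by push_cast; ring,
      Complex.exp_nat_mul, hv4]
  have main : ftilde lam u (Complex.exp (Complex.I * (t : ℂ))) =
      8 * Complex.exp (4 * Complex.I * (t : ℂ)) * g lam u t := by
    rw [hf, hgval, Finset.prod_range_succ, Finset.prod_range_succ, Finset.prod_range_one,
      i10, i20, i11, i21, i12, i22, hv2, hv4, hv6, hv8, hE4]
    linear_combination alg_identity u (lam:ℂ) A B Z hAB hZ2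
  refine ⟨main, ?_⟩
  rw [main]
  constructor
  · intro h
    have h8 : (8 : ℂ) * Complex.exp (4 * Complex.I * (t:ℂ)) ≠ 0 :=
      mul_ne_zero (by norm_num) (Complex.exp_ne_zero _)
    rcases mul_eq_zero.mp h with h' | h'
    · exact absurd h' h8
    · exact h'
  · intro h
    rw [h, mul_zero]
end

section
/- Let u, v : ℝ³ × ℝ → ℂ be given by u = (x²+y²+z²−t²−1+2iz)/(x²+y²+z²−(t−i)²) and v = 2(x−iy)/(x²+y²+z²−(t−i)²). Then |u|² + |v|² = 1 at every point (x,y,z,t) ∈ ℝ³ × ℝ where the denominator x²+y²+z²−(t−i)² is nonzero; i.e., (u,v) maps ℝ³ (for each fixed time t) into the unit three-sphere S³ ⊂ ℂ². -/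
open Complex

/-! With `ρ = x² + y² + z² - t²` the denominator is `D = ρ + 1 + 2it` and the first numerator is
`N = ρ - 1 + 2iz`, so `|D|² - |N|² = 4ρ + 4t² - 4z² = 4(x² + y²) = |2(x - iy)|²`.
`D` never vanishes: its imaginary part `2t` is zero only at `t = 0`, where `D = x² + y² + z² + 1`. -/

theorem norm_div_sq_add_norm_div_sq_eq_one {𝕜 : Type*} [NormedDivisionRing 𝕜] {a b d : 𝕜}
    (hd : d ≠ 0) (h : ‖a‖ ^ 2 + ‖b‖ ^ 2 = ‖d‖ ^ 2) : ‖a / d‖ ^ 2 + ‖b / d‖ ^ 2 = 1 := by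
  rw [norm_div, norm_div, div_pow, div_pow, ← add_div, h, div_self (by positivity)]

theorem ofReal_sub_sub_I_sq_ne_zero {r : ℝ} (hr : 0 ≤ r) (t : ℝ) :
    (r : ℂ) - ((t : ℂ) - I) ^ 2 ≠ 0 := by
  intro h
  have hre := congrArg re h
  have him := congrArg im h
  simp only [sq, sub_re, sub_im, mul_re, mul_im, ofReal_re, ofReal_im, I_re, I_im,
    zero_re, zero_im] at hre him
  nlinarith

theorem norm_sq_add_norm_sq_eq_norm_sq_denom (x y z t : ℝ) :
    ‖(x : ℂ) ^ 2 + (y : ℂ) ^ 2 + (z : ℂ) ^ 2 - (t : ℂ) ^ 2 - 1 + 2 * I * (z : ℂ)‖ ^ 2 +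
      ‖2 * ((x : ℂ) - I * (y : ℂ))‖ ^ 2 =
      ‖(x : ℂ) ^ 2 + (y : ℂ) ^ 2 + (z : ℂ) ^ 2 - ((t : ℂ) - I) ^ 2‖ ^ 2 := by
  simp only [Complex.sq_norm]
  simp only [normSq_apply, sq, mul_re, mul_im, add_re, add_im, sub_re, sub_im,
    ofReal_re, ofReal_im, I_re, I_im, one_re, one_im, re_ofNat, im_ofNat]
  ring

theorem stereographic_projection_lands_on_sphere_general
    (x y z t : ℝ) :
    ‖(((x : ℂ) ^ 2 + (y : ℂ) ^ 2 + (z : ℂ) ^ 2 - (t : ℂ) ^ 2 - 1 + 2 * Complex.I * (z : ℂ)) /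
        ((x : ℂ) ^ 2 + (y : ℂ) ^ 2 + (z : ℂ) ^ 2 - ((t : ℂ) - Complex.I) ^ 2))‖ ^ 2 +
    ‖((2 * ((x : ℂ) - Complex.I * (y : ℂ))) /
        ((x : ℂ) ^ 2 + (y : ℂ) ^ 2 + (z : ℂ) ^ 2 - ((t : ℂ) - Complex.I) ^ 2))‖ ^ 2 = 1 := by
  have hD : (x : ℂ) ^ 2 + (y : ℂ) ^ 2 + (z : ℂ) ^ 2 - ((t : ℂ) - I) ^ 2 ≠ 0 := by
    have hr : (0 : ℝ) ≤ x ^ 2 + y ^ 2 + z ^ 2 := by positivity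
    exact_mod_cast ofReal_sub_sub_I_sq_ne_zero hr t
  exact norm_div_sq_add_norm_div_sq_eq_one hD (norm_sq_add_norm_sq_eq_norm_sq_denom x y z t)

/-- The time-dependent inverse stereographic projection
`(u,v)` lands on the unit three-sphere `|u|² + |v|² = 1`. -/
theorem stereographic_projection_lands_on_sphere
    (x y z t : ℝ)
    (hD : ((x : ℂ) ^ 2 + (y : ℂ) ^ 2 + (z : ℂ) ^ 2 - ((t : ℂ) - Complex.I) ^ 2) ≠ 0) :
    ‖(((x : ℂ) ^ 2 + (y : ℂ) ^ 2 + (z : ℂ) ^ 2 - (t : ℂ) ^ 2 - 1 + 2 * Complex.I * (z : ℂ)) /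
        ((x : ℂ) ^ 2 + (y : ℂ) ^ 2 + (z : ℂ) ^ 2 - ((t : ℂ) - Complex.I) ^ 2))‖ ^ 2 +
    ‖((2 * ((x : ℂ) - Complex.I * (y : ℂ))) /
        ((x : ℂ) ^ 2 + (y : ℂ) ^ 2 + (z : ℂ) ^ 2 - ((t : ℂ) - Complex.I) ^ 2))‖ ^ 2 = 1 :=
  stereographic_projection_lands_on_sphere_general x y z t
end
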